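/- Let f be analytic on the open unit disk 𝔻 with f(0) = 0, f'(0) = 1, and f'(z) ≠ 0 for all z ∈ 𝔻. If |z² f'''(z)/f'(z) + 4 z f''(z)/f'(z)| < 5/2 for all z ∈ 𝔻, then Re(1 + z f''(z)/f'(z)) > 0 for all z ∈ 𝔻, i.e., f is convex. -/

import Mathlib

/-!
Put `p(z) = 1 + z f''(z)/f'(z)`, so that `p(0) = 1` and the hypothesis reads
`|z p'(z) + p(z)² + p(z) - 2| < 5/2`. If `Re p` is not positive on the disk, take a point `z₀`
of least modulus with `Re p(z₀) = 0`, say `p(z₀) = i x`. On the disk `|z| < |z₀|` the Cayley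
transform `w = (1 - p)/(1 + p)` maps into the unit disk and vanishes at `0`, so by Schwarz's lemma
`|w(t z₀)| ≤ t` for `t < 1`, while `|w(z₀)| = 1`. Differentiating `|w(t z₀)|² ≤ t²` at `t = 1`
(Jack's lemma) gives `Re (z₀ p'(z₀)) ≤ -(1 + x²)/2`, whence
`Re (z₀ p'(z₀) + p(z₀)² + p(z₀) - 2) ≤ -5/2`, a contradiction.
-/

open Complex ComplexConjugate Metric Set Filter Topology

theorem exists_zero_pos_on_ball_norm {E : Type*} [NormedAddCommGroup E] [NormedSpace ℝ E]
    [ProperSpace E] {g : E → ℝ} {R : ℝ} (hg : ContinuousOn g (ball 0 R)) (hg0 : 0 < g 0)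
    {z₁ : E} (hz₁ : z₁ ∈ ball 0 R) (hgz₁ : g z₁ ≤ 0) :
    ∃ z₀ ∈ ball (0 : E) R, g z₀ = 0 ∧ ∀ z ∈ ball (0 : E) ‖z₀‖, 0 < g z := by
  have hsub : closedBall (0 : E) ‖z₁‖ ⊆ ball 0 R :=
    closedBall_subset_ball (by simpa using hz₁)
  set K := closedBall (0 : E) ‖z₁‖ ∩ g ⁻¹' {0}
  have hK : IsCompact K := (isCompact_closedBall 0 _).of_isClosed_subset
    ((hg.mono hsub).preimage_isClosed_of_isClosed isClosed_closedBall isClosed_singleton)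
    inter_subset_left
  have hzero : ∀ z, ‖z‖ ≤ ‖z₁‖ → g z ≤ 0 → ∃ y ∈ K, ‖y‖ ≤ ‖z‖ := by
    intro z hz hgz
    obtain ⟨y, hy, hgy⟩ := (convex_closedBall (0 : E) ‖z‖).isPreconnected.intermediate_value
      (by simp) (by simp) (hg.mono ((closedBall_subset_closedBall hz).trans hsub)) ⟨hgz, hg0.le⟩
    have hy' : ‖y‖ ≤ ‖z‖ := by simpa using hy
    exact ⟨y, ⟨by simpa using hy'.trans hz, hgy⟩, hy'⟩
  obtain ⟨y₁, hy₁K, -⟩ := hzero z₁ le_rfl hgz₁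
  obtain ⟨z₀, hz₀K, hz₀min⟩ := hK.exists_isMinOn ⟨y₁, hy₁K⟩ continuous_norm.continuousOn
  refine ⟨z₀, hsub hz₀K.1, hz₀K.2, fun z hz => ?_⟩
  rw [mem_ball_zero_iff] at hz
  by_contra! hgz
  obtain ⟨y, hyK, hy⟩ := hzero z (hz.le.trans (by simpa using hz₀K.1)) hgz
  exact (hy.trans_lt hz).not_ge (hz₀min hyK)

theorem one_le_inner_of_norm_le_of_norm_eq_one {E : Type*} [NormedAddCommGroup E]
    [InnerProductSpace ℝ E] {v : ℝ → E} {D : E} (hv : HasDerivAt v D 1)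
    (hle : ∀ᶠ t in 𝓝[<] 1, ‖v t‖ ≤ t) (h1 : ‖v 1‖ = 1) :
    1 ≤ inner ℝ (v 1) D := by
  have hmax : IsLocalMaxOn (fun t => ‖v t‖ ^ 2 - t ^ 2) (Iio 1) 1 := by
    filter_upwards [hle] with t ht
    simp only [h1]
    nlinarith [norm_nonneg (v t)]
  have hderiv : HasDerivAt (fun t => ‖v t‖ ^ 2 - t ^ 2) (2 * inner ℝ (v 1) D - 2 * 1) 1 := by
    have hsq : HasDerivAt (fun t : ℝ => t ^ 2) (2 * 1) 1 := by
      simpa using hasDerivAt_pow 2 (1 : ℝ)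
    exact hv.norm_sq.fun_sub hsq
  have hcone : (-1 : ℝ) ∈ posTangentConeAt (Iio 1) 1 :=
    mem_posTangentConeAt_of_frequently_mem <| Eventually.frequently <| by
      filter_upwards [self_mem_nhdsWithin] with t ht
      simpa using ht
  have hslope := hmax.hasFDerivWithinAt_nonpos hderiv.hasDerivWithinAt.hasFDerivWithinAt hcone
  simp only [ContinuousLinearMap.toSpanSingleton_apply, smul_eq_mul] at hslope
  linarith

theorem one_add_ne_zero_of_re_nonneg {a : ℂ} (ha : 0 ≤ a.re) : 1 + a ≠ 0 := by
  intro h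
  have := congrArg re h
  simp only [add_re, one_re, zero_re] at this
  linarith

theorem norm_one_sub_le_norm_one_add {a : ℂ} (ha : 0 ≤ a.re) : ‖1 - a‖ ≤ ‖1 + a‖ := by
  rw [← sq_le_sq₀ (norm_nonneg _) (norm_nonneg _), Complex.sq_norm, Complex.sq_norm,
    normSq_apply, normSq_apply]
  simp only [sub_re, sub_im, add_re, add_im, one_re, one_im]
  nlinarith

theorem norm_one_sub_div_one_add_le_one {a : ℂ} (ha : 0 ≤ a.re) : ‖(1 - a) / (1 + a)‖ ≤ 1 := by
  rw [norm_div]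
  exact div_le_one_of_le₀ (norm_one_sub_le_norm_one_add ha) (norm_nonneg _)

theorem norm_one_sub_div_one_add_eq_one {a : ℂ} (ha : a.re = 0) : ‖(1 - a) / (1 + a)‖ = 1 := by
  have h : ‖1 - a‖ = ‖1 + a‖ := by
    rw [← sq_eq_sq₀ (norm_nonneg _) (norm_nonneg _), Complex.sq_norm, Complex.sq_norm,
      normSq_apply, normSq_apply]
    simp only [sub_re, sub_im, add_re, add_im, one_re, one_im, ha]
    ring
  rw [norm_div, h, div_self (norm_ne_zero_iff.2 (one_add_ne_zero_of_re_nonneg ha.ge))]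

theorem re_mul_conj_one_sub_div_one_add {a q : ℂ} (ha : a.re = 0) :
    (-2 * q / (1 + a) ^ 2 * conj ((1 - a) / (1 + a))).re = -2 * q.re / (1 + a.im ^ 2) := by
  have hconj : conj a = -a := by apply Complex.ext <;> simp [ha]
  have hsq : (1 : ℂ) - a ^ 2 = ((1 + a.im ^ 2 : ℝ) : ℂ) := by
    apply Complex.ext <;> simp [sq, ha]
  have hadd : 1 + a ≠ 0 := one_add_ne_zero_of_re_nonneg ha.ge
  have hsub : 1 - a ≠ 0 := by
    simpa [sub_eq_add_neg] using one_add_ne_zero_of_re_nonneg (a := -a) (by simp [ha])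
  have h : -2 * q / (1 + a) ^ 2 * conj ((1 - a) / (1 + a)) = -2 * q / ((1 + a.im ^ 2 : ℝ) : ℂ) := by
    have hsq0 : (1 : ℂ) - a ^ 2 ≠ 0 := by
      rw [show (1 : ℂ) - a ^ 2 = (1 - a) * (1 + a) by ring]
      exact mul_ne_zero hsub hadd
    rw [map_div₀, map_sub, map_add, map_one, hconj, ← sub_eq_add_neg, ← hsq]
    field_simp
    ring
  rw [h, div_ofReal_re]
  simp

theorem norm_one_sub_div_one_add_le_of_re_pos {p : ℂ → ℂ} {r : ℝ}
    (hp : DifferentiableOn ℂ p (ball 0 r)) (hp0 : p 0 = 1)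
    (hpos : ∀ z ∈ ball (0 : ℂ) r, 0 < (p z).re) {z : ℂ} (hz : z ∈ ball 0 r) :
    ‖(1 - p z) / (1 + p z)‖ ≤ ‖z‖ / r := by
  have hd : DifferentiableOn ℂ (fun z => (1 - p z) / (1 + p z)) (ball 0 r) :=
    (hp.const_sub 1).div (hp.const_add 1) fun z hz =>
      one_add_ne_zero_of_re_nonneg (hpos z hz).le
  have hmaps : MapsTo (fun z => (1 - p z) / (1 + p z)) (ball 0 r) (closedBall 0 1) :=
    fun z hz => by simpa using norm_one_sub_div_one_add_le_one (hpos z hz).le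
  have hdist := Complex.dist_le_div_mul_dist_of_mapsTo_ball hd (by simpa [hp0] using hmaps) hz
  simpa only [hp0, sub_self, zero_div, dist_zero_right, one_div_mul_eq_div] using hdist

theorem re_pos_of_forall_re_eq_zero_lt_re_mul_deriv {p : ℂ → ℂ}
    (hp : AnalyticOnNhd ℂ p (ball 0 1)) (hp0 : p 0 = 1)
    (h : ∀ z ∈ ball (0 : ℂ) 1, (p z).re = 0 → -(1 + (p z).im ^ 2) / 2 < (z * deriv p z).re) :
    ∀ z ∈ ball (0 : ℂ) 1, 0 < (p z).re := by
  intro z₁ hz₁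
  by_contra! hz₁le
  obtain ⟨z₀, hz₀, hre, hpos⟩ := exists_zero_pos_on_ball_norm (g := fun z => (p z).re)
    (continuous_re.comp_continuousOn hp.continuousOn) (by simp [hp0]) hz₁ hz₁le
  set r := ‖z₀‖
  have hr : 0 < r := norm_pos_iff.2 fun h => by simp [h, hp0] at hre
  have hr1 : r < 1 := by simpa using hz₀
  set w : ℂ → ℂ := fun z => (1 - p z) / (1 + p z)
  have hschwarz : ∀ᶠ t : ℝ in 𝓝[<] 1, ‖w (t * z₀)‖ ≤ t := by
    filter_upwards [Ioo_mem_nhdsLT zero_lt_one] with t ht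
    have htz : ‖(t : ℂ) * z₀‖ = t * r := by simp [r, abs_of_pos ht.1]
    have hbound := norm_one_sub_div_one_add_le_of_re_pos
      (hp.differentiableOn.mono (ball_subset_ball hr1.le)) hp0 hpos (z := t * z₀)
      (by rw [mem_ball_zero_iff, htz]; exact mul_lt_of_lt_one_left hr ht.2)
    rwa [htz, mul_div_assoc, div_self hr.ne', mul_one] at hbound
  have hderiv : HasDerivAt (fun t : ℝ => w (t * z₀))
      (-2 * (z₀ * deriv p z₀) / (1 + p z₀) ^ 2) 1 := by
    have hp' := (hp z₀ hz₀).differentiableAt.hasDerivAt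
    have hw := (hp'.const_sub 1).fun_div (hp'.const_add 1) (one_add_ne_zero_of_re_nonneg hre.ge)
    have hlin : HasDerivAt (fun c : ℂ => c * z₀) z₀ ((1 : ℝ) : ℂ) := by
      simpa only [id, one_mul] using (hasDerivAt_id ((1 : ℝ) : ℂ)).mul_const z₀
    exact (hw.comp_of_eq _ hlin (by simp)).comp_ofReal.congr_deriv (by ring)
  have hjack := one_le_inner_of_norm_le_of_norm_eq_one hderiv hschwarz
    (by simpa [w] using norm_one_sub_div_one_add_eq_one hre)
  rw [Complex.inner, ofReal_one, one_mul, re_mul_conj_one_sub_div_one_add hre,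
    le_div_iff₀ (by positivity)] at hjack
  linarith [h z₀ hz₀ hre]

theorem re_pos_of_norm_mul_deriv_add_sq_add_sub_two_lt {p : ℂ → ℂ}
    (hp : AnalyticOnNhd ℂ p (ball 0 1)) (hp0 : p 0 = 1)
    (h : ∀ z ∈ ball (0 : ℂ) 1, ‖z * deriv p z + p z ^ 2 + p z - 2‖ < 5 / 2) :
    ∀ z ∈ ball (0 : ℂ) 1, 0 < (p z).re := by
  refine re_pos_of_forall_re_eq_zero_lt_re_mul_deriv hp hp0 fun z hz hre => ?_
  by_contra! hle
  have hre' : (z * deriv p z + p z ^ 2 + p z - 2).re = (z * deriv p z).re - (p z).im ^ 2 - 2 := by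
    simp only [sub_re, add_re, sq, mul_re, hre, re_ofNat]
    ring
  have hnorm := (neg_le_abs _).trans (abs_re_le_norm (z * deriv p z + p z ^ 2 + p z - 2))
  linarith [h z hz, sq_nonneg (p z).im]

theorem mul_deriv_add_sq_add_sub_two_eq {𝕜 : Type*} [NontriviallyNormedField 𝕜] {g : 𝕜 → 𝕜}
    {z : 𝕜} (hg : DifferentiableAt 𝕜 g z) (hg' : DifferentiableAt 𝕜 (deriv g) z) (hgz : g z ≠ 0) :
    z * deriv (fun w => 1 + w * deriv g w / g w) z + (1 + z * deriv g z / g z) ^ 2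
        + (1 + z * deriv g z / g z) - 2
      = z ^ 2 * deriv (deriv g) z / g z + 4 * (z * deriv g z / g z) := by
  have hp := (((hasDerivAt_id' z).fun_mul hg'.hasDerivAt).fun_div hg.hasDerivAt hgz).const_add 1
  rw [hp.deriv]
  field_simp
  ring

theorem stmt_2_general (f : ℂ → ℂ)
    (hf : AnalyticOnNhd ℂ f (ball (0 : ℂ) 1))
    (hf'ne : ∀ z ∈ ball (0 : ℂ) 1, deriv f z ≠ 0)
    (hineq : ∀ z ∈ ball (0 : ℂ) 1,
      ‖z ^ 2 * deriv (deriv (deriv f)) z / deriv f z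
        + 4 * (z * deriv (deriv f) z / deriv f z)‖ < 5 / 2) :
    ∀ z ∈ ball (0 : ℂ) 1, 0 < (1 + z * deriv (deriv f) z / deriv f z).re := by
  have hf' := hf.deriv
  have hf'' := hf'.deriv
  refine re_pos_of_norm_mul_deriv_add_sq_add_sub_two_lt
    (fun z hz => analyticAt_const.add ((analyticAt_id.mul (hf'' z hz)).div (hf' z hz) (hf'ne z hz)))
    (by simp) fun z hz => ?_
  rw [mul_deriv_add_sq_add_sub_two_eq (hf' z hz).differentiableAt
    (hf'' z hz).differentiableAt (hf'ne z hz)]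
  exact hineq z hz

/-- **Corollary 1 (ii).** If `f ∈ 𝒜`, `f' ≠ 0` on the disk, and
`|z² f'''/f' + 4 z f''/f'| < 5/2` on the disk, then `f` is convex. -/
theorem stmt_2 (f : ℂ → ℂ)
    (hf : AnalyticOnNhd ℂ f (ball (0 : ℂ) 1))
    (hf0 : f 0 = 0) (hf'0 : deriv f 0 = 1)
    (hf'ne : ∀ z ∈ ball (0 : ℂ) 1, deriv f z ≠ 0)
    (hineq : ∀ z ∈ ball (0 : ℂ) 1,
      ‖z ^ 2 * deriv (deriv (deriv f)) z / deriv f z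
        + 4 * (z * deriv (deriv f) z / deriv f z)‖ < 5 / 2) :
    ∀ z ∈ ball (0 : ℂ) 1, 0 < (1 + z * deriv (deriv f) z / deriv f z).re :=
  stmt_2_general f hf hf'ne hineq
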